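/- arXiv:1406.2597 — 2 statements merged into one kernel-verified Lean document; each statement's English description precedes it below -/
import Mathlib

section
/- For every A ⊆ ℕ one has 0 ≤ λ̲(A) ≤ d̲_∞(A) ≤ d̄_∞(A) ≤ λ̄(A) ≤ 1. -/
/-!
For `α ≥ 0` and an ultrafilter `F` finer than `atTop`, `B ↦ F-lim A_α(n)/ℕ_α(n)` is a density
measure: summation by parts against the weights `k^α` shows that a set of asymptotic density `d`
has `A_α(n)/ℕ_α(n) → d`. Since `d̄_α(A)` and `d̲_α(A)` are cluster points of this ratio, they are
values of such measures and so lie in `[λ̲(A), λ̄(A)]`. The same summation by parts, now against the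
increasing weights `k^(β-α)`, shows that `d̄_α(A)` is nondecreasing in `α ≥ 0` (and
`d̲_α(A) = 1 - d̄_α(Aᶜ)` nonincreasing), so `d̄_∞(A)` and `d̲_∞(A)` exist and inherit the bounds.
-/

open Filter Topology

noncomputable section

/-- The space `ℓ∞` of bounded real sequences. -/
abbrev EllInfty : Type := lp (fun _ : ℕ => ℝ) ⊤

/-- The characteristic sequence of a set `A ⊆ ℕ` (as a plain function). -/
def chiFun (A : Set ℕ) : ℕ → ℝ := A.indicator 1

lemma chiFun_memℓp (A : Set ℕ) : Memℓp (chiFun A) ⊤ := by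
  apply memℓp_infty
  refine ⟨1, ?_⟩
  rintro r ⟨n, rfl⟩
  by_cases h : n ∈ A <;> simp [chiFun, Set.indicator, h]

/-- The characteristic sequence of a set `A ⊆ ℕ` as an element of `ℓ∞`. -/
def chi (A : Set ℕ) : EllInfty := ⟨chiFun A, chiFun_memℓp A⟩

/-- `A(n) = |A ∩ {1,…,n}|` (as a real number). -/
def count (A : Set ℕ) (n : ℕ) : ℝ := ∑ k ∈ Finset.Icc 1 n, chiFun A k

/-- `A` has asymptotic density `d`, i.e. `A(n)/n → d`. -/
def HasDensity (A : Set ℕ) (d : ℝ) : Prop :=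
  Tendsto (fun n => count A n / n) atTop (𝓝 d)

/-- A density measure: a finitely additive measure `μ : 𝒫(ℕ) → [0,1]` with `μ(ℕ) = 1`
which extends the asymptotic density. -/
def IsDensityMeasure (μ : Set ℕ → ℝ) : Prop :=
  (∀ A B : Set ℕ, Disjoint A B → μ (A ∪ B) = μ A + μ B) ∧
  (∀ A : Set ℕ, μ A ∈ Set.Icc (0 : ℝ) 1) ∧
  μ Set.univ = 1 ∧
  (∀ A d, HasDensity A d → μ A = d)

/-- The sequence of Cesàro averages `(x₁ + … + xₙ)/n`. -/
def cesaroAvg (x : ℕ → ℝ) (n : ℕ) : ℝ := (∑ i ∈ Finset.Icc 1 n, x i) / n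

/-- `x` has Cesàro mean `c`. -/
def HasCesaro (x : ℕ → ℝ) (c : ℝ) : Prop := Tendsto (cesaroAvg x) atTop (𝓝 c)

/-- A functional on `ℓ∞` is positive if it is nonnegative on nonnegative sequences. -/
def IsPositiveFunctional (f : EllInfty → ℝ) : Prop :=
  ∀ x : EllInfty, (∀ n, 0 ≤ x n) → 0 ≤ f x

/-- A functional on `ℓ∞` extends the Cesàro mean. -/
def ExtendsCesaro (f : EllInfty → ℝ) : Prop :=
  ∀ (x : EllInfty) (c : ℝ), HasCesaro (⇑x) c → f x = c

/-- The set of positive continuous linear functionals on `ℓ∞` extending the Cesàro mean. -/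
def Cesex : Set (EllInfty →L[ℝ] ℝ) :=
  {f | IsPositiveFunctional f ∧ ExtendsCesaro f}

/-- `f_C(x) = sup { f(x) : f ∈ Cesex }`. -/
def fC (x : EllInfty) : ℝ := sSup ((fun f : EllInfty →L[ℝ] ℝ => f x) '' Cesex)

/-- `Θ_{θ,n}(x) = (Σ_{θn < i ≤ n} x_i) / (n(1-θ))`. -/
def Theta (x : ℕ → ℝ) (θ : ℝ) (n : ℕ) : ℝ :=
  (∑ i ∈ Finset.Icc 1 n, if θ * n < (i : ℝ) then x i else 0) / (n * (1 - θ))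

/-- `Θ_θ(x) = limsup_{n → ∞} Θ_{θ,n}(x)`. -/
def ThetaSup (x : ℕ → ℝ) (θ : ℝ) : ℝ := limsup (Theta x θ) atTop

/-- `t(x) = lim_{θ → 1⁻} Θ_θ(x)`. -/
def tFun (x : ℕ → ℝ) : ℝ := limUnder (𝓝[<] (1 : ℝ)) (ThetaSup x)

/-- `A_α(n) = Σ_{k ∈ A, k ≤ n} k^α`. -/
def aSum (A : Set ℕ) (α : ℝ) (n : ℕ) : ℝ :=
  ∑ k ∈ Finset.Icc 1 n, chiFun A k * (k : ℝ) ^ α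

/-- The upper `α`-density `d̄_α(A) = limsup_{n→∞} A_α(n)/ℕ_α(n)`. -/
def upperADens (A : Set ℕ) (α : ℝ) : ℝ :=
  limsup (fun n => aSum A α n / aSum Set.univ α n) atTop

/-- The lower `α`-density `d̲_α(A) = liminf_{n→∞} A_α(n)/ℕ_α(n)`. -/
def lowerADens (A : Set ℕ) (α : ℝ) : ℝ :=
  liminf (fun n => aSum A α n / aSum Set.univ α n) atTop

/-- `d̄_∞(A) = lim_{α→∞} d̄_α(A)`. -/
def dInftyUpper (A : Set ℕ) : ℝ := limUnder (atTop : Filter ℝ) (upperADens A)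

/-- `d̲_∞(A) = lim_{α→∞} d̲_α(A)`. -/
def dInftyLower (A : Set ℕ) : ℝ := limUnder (atTop : Filter ℝ) (lowerADens A)

/-- The quotient `(A(n) - A(⌊θn⌋))/(n - θn)` appearing in the Pólya density. -/
def polyaQuot (A : Set ℕ) (θ : ℝ) (n : ℕ) : ℝ :=
  (count A n - count A ⌊θ * n⌋₊) / (n - θ * n)

/-- The upper Pólya density `p̄(A)`. -/
def pUpper (A : Set ℕ) : ℝ :=
  limUnder (𝓝[<] (1 : ℝ)) (fun θ => limsup (polyaQuot A θ) atTop)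

/-- The lower Pólya density `p̲(A)`. -/
def pLower (A : Set ℕ) : ℝ :=
  limUnder (𝓝[<] (1 : ℝ)) (fun θ => liminf (polyaQuot A θ) atTop)

/-- `λ̄(A) = sup { μ(A) : μ a density measure }`. -/
def lamUpper (A : Set ℕ) : ℝ := sSup {r | ∃ μ, IsDensityMeasure μ ∧ μ A = r}

/-- `λ̲(A) = inf { μ(A) : μ a density measure }`. -/
def lamLower (A : Set ℕ) : ℝ := sInf {r | ∃ μ, IsDensityMeasure μ ∧ μ A = r}

/-- `d̄*(A) = inf { d(B) : B ⊇ A, B ∈ 𝒟 }`. -/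
def dUpperStar (A : Set ℕ) : ℝ := sInf {r | ∃ B, A ⊆ B ∧ HasDensity B r}

/-- `d̲*(A) = sup { d(B) : B ⊆ A, B ∈ 𝒟 }`. -/
def dLowerStar (A : Set ℕ) : ℝ := sSup {r | ∃ B, B ⊆ A ∧ HasDensity B r}

/-- The `ℱ`-limit of a (bounded) real sequence along an ultrafilter `ℱ`:
the unique `L` with `Tendsto x ℱ (𝓝 L)` (when it exists). -/
def ulim (F : Ultrafilter ℕ) (x : ℕ → ℝ) : ℝ := limUnder (F : Filter ℕ) x

/-- An ultrafilter is free (non-principal) iff it contains all cofinite sets. -/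
def IsFreeUltrafilter (F : Ultrafilter ℕ) : Prop := (F : Filter ℕ) ≤ Filter.cofinite

/-- The set of positive functionals extending Cesàro mean, inside the weak-* dual of `ℓ∞`. -/
def CesexW : Set (WeakDual ℝ EllInfty) :=
  {f | (∀ x : EllInfty, (∀ n, 0 ≤ x n) → 0 ≤ f x) ∧
    ∀ (x : EllInfty) (c : ℝ), HasCesaro (⇑x) c → f x = c}

lemma chiFun_nonneg (A : Set ℕ) (k : ℕ) : 0 ≤ chiFun A k :=
  Set.indicator_nonneg (fun _ _ => zero_le_one) k

lemma chiFun_le_one (A : Set ℕ) (k : ℕ) : chiFun A k ≤ 1 :=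
  Set.indicator_le_self' (fun _ _ => zero_le_one) k

lemma chiFun_univ (k : ℕ) : chiFun Set.univ k = 1 :=
  Set.indicator_of_mem (Set.mem_univ k) 1

lemma chiFun_union {A B : Set ℕ} (h : Disjoint A B) (k : ℕ) :
    chiFun (A ∪ B) k = chiFun A k + chiFun B k :=
  congrFun (Set.indicator_union_of_disjoint h 1) k

section PowerSums

variable (A : Set ℕ) (α : ℝ) (n : ℕ)

lemma aSum_univ_eq : aSum Set.univ α n = ∑ k ∈ Finset.Icc 1 n, (k : ℝ) ^ α := by
  simp only [aSum, chiFun_univ, one_mul]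

lemma aSum_nonneg : 0 ≤ aSum A α n :=
  Finset.sum_nonneg fun k _ => mul_nonneg (chiFun_nonneg A k) (by positivity)

lemma aSum_le_aSum_univ : aSum A α n ≤ aSum Set.univ α n :=
  Finset.sum_le_sum fun k _ => by
    rw [chiFun_univ]
    exact mul_le_mul_of_nonneg_right (chiFun_le_one A k) (by positivity)

variable {n} in
lemma aSum_univ_pos (hn : 0 < n) : 0 < aSum Set.univ α n := by
  rw [aSum_univ_eq]
  exact Finset.sum_pos (fun k hk => by have := (Finset.mem_Icc.1 hk).1; positivity)
    ⟨1, Finset.mem_Icc.2 ⟨le_rfl, hn⟩⟩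

lemma aSum_union {B : Set ℕ} (h : Disjoint A B) : aSum (A ∪ B) α n = aSum A α n + aSum B α n := by
  simp only [aSum, chiFun_union h, add_mul, Finset.sum_add_distrib]

lemma aSum_add_aSum_compl : aSum A α n + aSum Aᶜ α n = aSum Set.univ α n := by
  rw [← aSum_union A α n disjoint_compl_right, Set.union_compl_self]

lemma aSum_zero : aSum A 0 n = count A n := by
  simp only [aSum, count, Real.rpow_zero, mul_one]

lemma aSum_univ_zero : aSum Set.univ 0 n = n := by
  simp [aSum_univ_eq]

variable {α}

lemma natCast_le_aSum_univ (hα : 0 ≤ α) : (n : ℝ) ≤ aSum Set.univ α n := by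
  rw [aSum_univ_eq]
  simpa using Finset.card_nsmul_le_sum (Finset.Icc 1 n) (fun k : ℕ => (k : ℝ) ^ α) 1
    fun k hk => Real.one_le_rpow (by exact_mod_cast (Finset.mem_Icc.1 hk).1) hα

lemma tendsto_aSum_univ_atTop (hα : 0 ≤ α) : Tendsto (aSum Set.univ α) atTop atTop :=
  tendsto_atTop_mono (fun n => natCast_le_aSum_univ n hα) tendsto_natCast_atTop_atTop

lemma aSum_univ_le_rpow (hα : 0 ≤ α) : aSum Set.univ α n ≤ (n : ℝ) ^ (α + 1) := by
  rw [aSum_univ_eq, Real.rpow_add_one' n.cast_nonneg (by linarith), mul_comm]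
  simpa using Finset.sum_le_card_nsmul (Finset.Icc 1 n) (fun k : ℕ => (k : ℝ) ^ α) _
    fun k hk => Real.rpow_le_rpow k.cast_nonneg (by exact_mod_cast (Finset.mem_Icc.1 hk).2) hα

/-- The upper half `n/2 < k ≤ n` of the sum alone contributes `(n/2)^(α+1)`. -/
lemma rpow_add_one_le_aSum_univ (hα : 0 ≤ α) :
    (n : ℝ) ^ (α + 1) ≤ 2 ^ (α + 1) * aSum Set.univ α n := by
  have hcard : (n : ℝ) / 2 ≤ (Finset.Ioc (n / 2) n).card := by
    rw [Nat.card_Ioc, div_le_iff₀ two_pos]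
    exact_mod_cast (by omega : n ≤ (n - n / 2) * 2)
  have hterm : ∀ k ∈ Finset.Ioc (n / 2) n, ((n : ℝ) / 2) ^ α ≤ (k : ℝ) ^ α := fun k hk => by
    have : n ≤ 2 * k := by have := (Finset.mem_Ioc.1 hk).1; omega
    exact Real.rpow_le_rpow (by positivity) (by rw [div_le_iff₀ two_pos]; exact_mod_cast (by omega))
      hα
  calc (n : ℝ) ^ (α + 1) = 2 ^ (α + 1) * ((n / 2) * (n / 2) ^ α) := by
        rw [mul_comm (n / 2 : ℝ), ← Real.rpow_add_one' (by positivity) (by linarith),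
          Real.div_rpow n.cast_nonneg zero_le_two, mul_div_cancel₀ _ (by positivity)]
    _ ≤ 2 ^ (α + 1) * ∑ k ∈ Finset.Ioc (n / 2) n, (k : ℝ) ^ α := by
        gcongr
        calc (n / 2 : ℝ) * (n / 2) ^ α ≤ (Finset.Ioc (n / 2) n).card * (n / 2 : ℝ) ^ α := by
              gcongr
          _ ≤ _ := by simpa using Finset.card_nsmul_le_sum _ _ _ hterm
    _ ≤ 2 ^ (α + 1) * aSum Set.univ α n := by
        rw [aSum_univ_eq]
        gcongr ?_ * ?_
        exact Finset.sum_le_sum_of_subset_of_nonneg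
          (fun k hk => by simp only [Finset.mem_Ioc, Finset.mem_Icc] at hk ⊢; omega)
          fun k _ _ => by positivity

end PowerSums

lemma sum_Icc_mul_eq_sub_sum (x w : ℕ → ℝ) (n : ℕ) :
    ∑ k ∈ Finset.Icc 1 n, x k * w k =
      (∑ k ∈ Finset.Icc 1 n, x k) * w n -
        ∑ k ∈ Finset.Ico 1 n, (∑ j ∈ Finset.Icc 1 k, x j) * (w (k + 1) - w k) := by
  induction n with
  | zero => simp
  | succ m ih =>
    have hsplit : ∑ k ∈ Finset.Ico 1 (m + 1), (∑ j ∈ Finset.Icc 1 k, x j) * (w (k + 1) - w k) =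
        ∑ k ∈ Finset.Ico 1 m, (∑ j ∈ Finset.Icc 1 k, x j) * (w (k + 1) - w k) +
          (∑ j ∈ Finset.Icc 1 m, x j) * (w (m + 1) - w m) := by
      rcases m.eq_zero_or_pos with rfl | hm
      · simp
      · exact Finset.sum_Ico_succ_top hm _
    rw [Finset.sum_Icc_succ_top (by omega), Finset.sum_Icc_succ_top (by omega), ih, hsplit]
    ring

/-- Summation by parts against the weights `k ^ (β - α)`. -/
lemma aSum_eq_sub_sum (A : Set ℕ) (α β : ℝ) (n : ℕ) :
    aSum A β n = aSum A α n * (n : ℝ) ^ (β - α) -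
      ∑ k ∈ Finset.Ico 1 n, aSum A α k * (((k + 1 : ℕ) : ℝ) ^ (β - α) - (k : ℝ) ^ (β - α)) := by
  refine (Finset.sum_congr rfl fun k hk => ?_).trans
    (sum_Icc_mul_eq_sub_sum (fun k => chiFun A k * (k : ℝ) ^ α) (fun k => (k : ℝ) ^ (β - α)) n)
  have hk : (0 : ℝ) < k := by exact_mod_cast (Finset.mem_Icc.1 hk).1
  rw [mul_assoc, ← Real.rpow_add hk, add_sub_cancel]

def abelWeight (α β : ℝ) (k : ℕ) : ℝ :=
  aSum Set.univ α k * (((k + 1 : ℕ) : ℝ) ^ (β - α) - (k : ℝ) ^ (β - α))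

lemma aSum_univ_eq_sub_sum (α β : ℝ) (n : ℕ) :
    aSum Set.univ β n = aSum Set.univ α n * (n : ℝ) ^ (β - α) -
      ∑ k ∈ Finset.Ico 1 n, abelWeight α β k :=
  aSum_eq_sub_sum Set.univ α β n

/-- The ratio `A_α(n) / ℕ_α(n)`, whose `limsup` and `liminf` are `d̄_α(A)` and `d̲_α(A)`. -/
def aRatio (A : Set ℕ) (α : ℝ) (n : ℕ) : ℝ := aSum A α n / aSum Set.univ α n

section Ratio

variable (A : Set ℕ) (α : ℝ)

lemma aRatio_nonneg (n : ℕ) : 0 ≤ aRatio A α n :=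
  div_nonneg (aSum_nonneg A α n) (aSum_nonneg _ α n)

lemma aRatio_le_one (n : ℕ) : aRatio A α n ≤ 1 :=
  div_le_one_of_le₀ (aSum_le_aSum_univ A α n) (aSum_nonneg _ α n)

lemma isBoundedUnder_le_aRatio (l : Filter ℕ) : IsBoundedUnder (· ≤ ·) l (aRatio A α) :=
  isBoundedUnder_of ⟨1, aRatio_le_one A α⟩

lemma isBoundedUnder_ge_aRatio (l : Filter ℕ) : IsBoundedUnder (· ≥ ·) l (aRatio A α) :=
  isBoundedUnder_of ⟨0, aRatio_nonneg A α⟩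

lemma aRatio_zero (n : ℕ) : aRatio A 0 n = count A n / n := by
  rw [aRatio, aSum_zero, aSum_univ_zero]

lemma aRatio_union {B : Set ℕ} (h : Disjoint A B) (n : ℕ) :
    aRatio (A ∪ B) α n = aRatio A α n + aRatio B α n := by
  rw [aRatio, aSum_union A α n h, add_div, aRatio, aRatio]

variable {n : ℕ}

lemma aRatio_univ (hn : 0 < n) : aRatio Set.univ α n = 1 :=
  div_self (aSum_univ_pos α hn).ne'

lemma aRatio_compl (hn : 0 < n) : aRatio Aᶜ α n = 1 - aRatio A α n := by
  rw [eq_sub_iff_add_eq', aRatio, aRatio, ← add_div, aSum_add_aSum_compl, div_self]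
  exact (aSum_univ_pos α hn).ne'

lemma aRatio_mul_aSum_univ (hn : 0 < n) : aRatio A α n * aSum Set.univ α n = aSum A α n :=
  div_mul_cancel₀ _ (aSum_univ_pos α hn).ne'

variable (β : ℝ)

lemma aSum_sub_aRatio_mul_aSum_univ (hn : 0 < n) :
    aSum A β n - aRatio A α n * aSum Set.univ β n =
      ∑ k ∈ Finset.Ico 1 n, (aRatio A α n - aRatio A α k) * abelWeight α β k := by
  have hterms :
      ∑ k ∈ Finset.Ico 1 n, aSum A α k * (((k + 1 : ℕ) : ℝ) ^ (β - α) - (k : ℝ) ^ (β - α)) =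
      ∑ k ∈ Finset.Ico 1 n, aRatio A α k * abelWeight α β k :=
    Finset.sum_congr rfl fun k hk => by
      rw [abelWeight, ← mul_assoc, aRatio_mul_aSum_univ A α (Finset.mem_Ico.1 hk).1]
  rw [aSum_eq_sub_sum A α β, aSum_univ_eq_sub_sum α β, hterms,
    ← aRatio_mul_aSum_univ A α hn]
  simp only [sub_mul, Finset.sum_sub_distrib, ← Finset.mul_sum]
  ring

end Ratio

section Comparison

variable (A : Set ℕ) {α β : ℝ}

lemma abelWeight_nonneg (hαβ : α ≤ β) (k : ℕ) : 0 ≤ abelWeight α β k :=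
  mul_nonneg (aSum_nonneg _ _ _) (sub_nonneg.2 (Real.rpow_le_rpow k.cast_nonneg
    (by push_cast; linarith) (sub_nonneg.2 hαβ)))

lemma sum_abelWeight_le (hα : 0 ≤ α) (hαβ : α ≤ β) (n : ℕ) :
    ∑ k ∈ Finset.Ico 1 n, abelWeight α β k ≤ 2 ^ (β + 1) * aSum Set.univ β n := by
  calc ∑ k ∈ Finset.Ico 1 n, abelWeight α β k
        = aSum Set.univ α n * (n : ℝ) ^ (β - α) - aSum Set.univ β n := by
          rw [aSum_univ_eq_sub_sum α β n]; ring
    _ ≤ (n : ℝ) ^ (α + 1) * (n : ℝ) ^ (β - α) :=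
        (sub_le_self _ (aSum_nonneg _ _ _)).trans
          (mul_le_mul_of_nonneg_right (aSum_univ_le_rpow n hα) (by positivity))
    _ = (n : ℝ) ^ (β + 1) := by
        rw [← Real.rpow_add' n.cast_nonneg (by linarith)]; ring_nf
    _ ≤ 2 ^ (β + 1) * aSum Set.univ β n := rpow_add_one_le_aSum_univ n (hα.trans hαβ)

/-- The terms `k < K` of the summation by parts contribute a bounded amount, which becomes
negligible against `ℕ_β(n) → ∞`; the terms `K ≤ k < n` are controlled by the hypothesis. -/
lemma eventually_aRatio_sub_le_aRatio (hα : 0 ≤ α) (hαβ : α ≤ β) {ε : ℝ} (hε : 0 < ε) (K : ℕ) :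
    ∀ᶠ n in atTop, (∀ k ∈ Finset.Ico K n, aRatio A α k ≤ aRatio A α n + ε) →
      aRatio A α n - (2 ^ (β + 1) + 1) * ε ≤ aRatio A β n := by
  set C := ∑ k ∈ Finset.Ico 1 K, abelWeight α β k
  filter_upwards [eventually_gt_atTop 0,
    (tendsto_aSum_univ_atTop (hα.trans hαβ)).eventually_ge_atTop (C / ε)] with n hn hCn hclose
  have hw := abelWeight_nonneg hαβ
  have hterm : ∀ k ∈ Finset.Ico 1 n, -(ε * abelWeight α β k) -
      (if k < K then abelWeight α β k else 0) ≤
        (aRatio A α n - aRatio A α k) * abelWeight α β k := by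
    intro k hk
    split_ifs with hkK
    · nlinarith [aRatio_nonneg A α n, aRatio_le_one A α k, hw k]
    · nlinarith [hclose k (Finset.mem_Ico.2 ⟨not_lt.1 hkK, (Finset.mem_Ico.1 hk).2⟩), hw k]
  have hhead : ∑ k ∈ Finset.Ico 1 n, (if k < K then abelWeight α β k else 0) ≤ C := by
    rw [← Finset.sum_filter]
    exact Finset.sum_le_sum_of_subset_of_nonneg
      (fun k hk => by simp only [Finset.mem_filter, Finset.mem_Ico] at hk ⊢; omega)
      fun k _ _ => hw k
  have hsum := Finset.sum_le_sum hterm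
  rw [Finset.sum_sub_distrib, Finset.sum_neg_distrib, ← Finset.mul_sum,
    ← aSum_sub_aRatio_mul_aSum_univ A α β hn] at hsum
  have htail := mul_le_mul_of_nonneg_left (sum_abelWeight_le hα hαβ n) hε.le
  rw [div_le_iff₀ hε] at hCn
  change _ ≤ aSum A β n / aSum Set.univ β n
  rw [le_div_iff₀ (aSum_univ_pos β hn)]
  linarith

lemma upperADens_eq (α : ℝ) : upperADens A α = limsup (aRatio A α) atTop := rfl

lemma lowerADens_eq (α : ℝ) : lowerADens A α = liminf (aRatio A α) atTop := rfl

lemma upperADens_mono (hα : 0 ≤ α) (hαβ : α ≤ β) : upperADens A α ≤ upperADens A β := by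
  rw [upperADens_eq, upperADens_eq]
  refine le_of_forall_sub_le fun δ hδ => ?_
  obtain ⟨ε, hε, hδε⟩ : ∃ ε > 0, δ = (2 * (2 ^ (β + 1) + 1) + 1) * ε :=
    ⟨δ / (2 * (2 ^ (β + 1) + 1) + 1), by positivity, by field_simp⟩
  obtain ⟨K, hK⟩ := eventually_atTop.1 (eventually_lt_of_limsup_lt
    (lt_add_of_pos_right _ hε) (isBoundedUnder_le_aRatio A α atTop))
  have hfreq := (frequently_lt_of_lt_limsup (isBoundedUnder_ge_aRatio A α atTop).isCoboundedUnder_le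
    (sub_lt_self _ hε)).and_eventually
      (eventually_aRatio_sub_le_aRatio A hα hαβ (mul_pos two_pos hε) K)
  refine le_limsup_of_frequently_le (hfreq.mono fun n ⟨hn, himp⟩ => ?_)
    (isBoundedUnder_le_aRatio A β atTop)
  have := himp fun k hk => by linarith [hK k (Finset.mem_Ico.1 hk).1]
  linarith

lemma eventually_lt_aRatio_of_tendsto (hα : 0 ≤ α) (hαβ : α ≤ β) {d : ℝ}
    (h : Tendsto (aRatio A α) atTop (𝓝 d)) {δ : ℝ} (hδ : 0 < δ) :
    ∀ᶠ n in atTop, d - δ < aRatio A β n := by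
  obtain ⟨ε, hε, hδε⟩ : ∃ ε > 0, δ = (2 ^ (β + 1) + 3) * ε :=
    ⟨δ / (2 ^ (β + 1) + 3), by positivity, by field_simp⟩
  obtain ⟨K, hK⟩ := eventually_atTop.1 ((tendsto_order.1 h).2 (d + ε / 2) (by linarith))
  filter_upwards [(tendsto_order.1 h).1 (d - ε / 2) (by linarith),
    eventually_aRatio_sub_le_aRatio A hα hαβ hε K] with n hn himp
  have := himp fun k hk => by linarith [hK k (Finset.mem_Ico.1 hk).1]
  linarith

lemma tendsto_aRatio_of_le (hα : 0 ≤ α) (hαβ : α ≤ β) {d : ℝ}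
    (h : Tendsto (aRatio A α) atTop (𝓝 d)) : Tendsto (aRatio A β) atTop (𝓝 d) := by
  have hcompl : Tendsto (aRatio Aᶜ α) atTop (𝓝 (1 - d)) :=
    (h.const_sub 1).congr' ((eventually_gt_atTop 0).mono fun n hn => (aRatio_compl A α hn).symm)
  refine tendsto_order.2 ⟨fun a ha => ?_, fun b hb => ?_⟩
  · simpa using eventually_lt_aRatio_of_tendsto A hα hαβ h (sub_pos.2 ha)
  · filter_upwards [eventually_lt_aRatio_of_tendsto Aᶜ hα hαβ hcompl (sub_pos.2 hb),
      eventually_gt_atTop 0] with n hn hn0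
    rw [aRatio_compl A β hn0] at hn
    linarith

end Comparison

lemma HasDensity.tendsto_aRatio {A : Set ℕ} {d β : ℝ} (h : HasDensity A d) (hβ : 0 ≤ β) :
    Tendsto (aRatio A β) atTop (𝓝 d) :=
  tendsto_aRatio_of_le A le_rfl hβ ((funext (aRatio_zero A)).symm ▸ h)

lemma tendsto_ulim_of_isCompact {F : Ultrafilter ℕ} {x : ℕ → ℝ} {s : Set ℝ} (hs : IsCompact s)
    (hx : ∀ n, x n ∈ s) : Tendsto x F (𝓝 (ulim F x)) := by
  obtain ⟨a, -, ha⟩ := hs.ultrafilter_le_nhds (F.map x)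
    (le_principal_iff.2 (Ultrafilter.mem_map.2 (Filter.univ_mem' hx)))
  exact tendsto_nhds_limUnder ⟨a, ha⟩

lemma isDensityMeasure_ulim_aRatio {F : Ultrafilter ℕ} (hF : (F : Filter ℕ) ≤ atTop) {α : ℝ}
    (hα : 0 ≤ α) : IsDensityMeasure fun B => ulim F (aRatio B α) := by
  have ht : ∀ B : Set ℕ, Tendsto (aRatio B α) F (𝓝 (ulim F (aRatio B α))) := fun B =>
    tendsto_ulim_of_isCompact isCompact_Icc fun n => ⟨aRatio_nonneg B α n, aRatio_le_one B α n⟩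
  refine ⟨fun A B hAB => ?_, fun B => ?_, ?_, fun B d hB => ?_⟩
  · exact (((ht A).add (ht B)).congr fun n => (aRatio_union A α hAB n).symm).limUnder_eq
  · exact isClosed_Icc.mem_of_tendsto (ht B)
      (Eventually.of_forall fun n => ⟨aRatio_nonneg B α n, aRatio_le_one B α n⟩)
  · exact (tendsto_const_nhds.congr'
      (hF ((eventually_gt_atTop 0).mono fun n hn => (aRatio_univ α hn).symm))).limUnder_eq
  · exact ((hB.tendsto_aRatio hα).mono_left hF).limUnder_eq

lemma exists_isDensityMeasure_of_mapClusterPt {A : Set ℕ} {α r : ℝ} (hα : 0 ≤ α)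
    (hr : MapClusterPt r atTop (aRatio A α)) : ∃ μ, IsDensityMeasure μ ∧ μ A = r := by
  obtain ⟨F, hF, hFr⟩ := mapClusterPt_iff_ultrafilter.1 hr
  exact ⟨_, isDensityMeasure_ulim_aRatio hF hα, hFr.limUnder_eq⟩

section DensityMeasureBounds

variable {μ : Set ℕ → ℝ} (A : Set ℕ) {α : ℝ}

lemma le_lamUpper (hμ : IsDensityMeasure μ) : μ A ≤ lamUpper A :=
  le_csSup ⟨1, by rintro _ ⟨ν, hν, rfl⟩; exact (hν.2.1 A).2⟩ ⟨μ, hμ, rfl⟩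

lemma lamLower_le (hμ : IsDensityMeasure μ) : lamLower A ≤ μ A :=
  csInf_le ⟨0, by rintro _ ⟨ν, hν, rfl⟩; exact (hν.2.1 A).1⟩ ⟨μ, hμ, rfl⟩

lemma lamUpper_le_one : lamUpper A ≤ 1 :=
  Real.sSup_le (by rintro _ ⟨ν, hν, rfl⟩; exact (hν.2.1 A).2) zero_le_one

lemma lamLower_nonneg : 0 ≤ lamLower A :=
  Real.sInf_nonneg (by rintro _ ⟨ν, hν, rfl⟩; exact (hν.2.1 A).1)

lemma upperADens_le_lamUpper (hα : 0 ≤ α) : upperADens A α ≤ lamUpper A := by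
  obtain ⟨μ, hμ, hμA⟩ := exists_isDensityMeasure_of_mapClusterPt hα
    (MapClusterPt.limsup (isBoundedUnder_ge_aRatio A α atTop).isCoboundedUnder_le
      (isBoundedUnder_le_aRatio A α atTop))
  rw [upperADens_eq, ← hμA]
  exact le_lamUpper A hμ

lemma lamLower_le_lowerADens (hα : 0 ≤ α) : lamLower A ≤ lowerADens A α := by
  obtain ⟨μ, hμ, hμA⟩ := exists_isDensityMeasure_of_mapClusterPt hα
    (MapClusterPt.liminf (isBoundedUnder_le_aRatio A α atTop).isCoboundedUnder_ge
      (isBoundedUnder_ge_aRatio A α atTop))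
  rw [lowerADens_eq, ← hμA]
  exact lamLower_le A hμ

end DensityMeasureBounds

section LimitInα

variable (A : Set ℕ)

lemma upperADens_le_one (α : ℝ) : upperADens A α ≤ 1 :=
  limsup_le_of_le (isBoundedUnder_ge_aRatio A α atTop).isCoboundedUnder_le
    (Eventually.of_forall (aRatio_le_one A α))

lemma lowerADens_le_upperADens (α : ℝ) : lowerADens A α ≤ upperADens A α :=
  liminf_le_limsup (isBoundedUnder_le_aRatio A α atTop) (isBoundedUnder_ge_aRatio A α atTop)

lemma lowerADens_eq_one_sub_upperADens_compl (α : ℝ) :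
    lowerADens A α = 1 - upperADens Aᶜ α := by
  have hcompl : aRatio A α =ᶠ[atTop] fun n => 1 - aRatio Aᶜ α n :=
    (eventually_gt_atTop 0).mono fun n hn => by
      simp only [aRatio_compl A α hn, sub_sub_cancel]
  rw [lowerADens_eq, upperADens_eq, liminf_congr hcompl]
  exact liminf_const_sub atTop _ 1 (isBoundedUnder_le_aRatio Aᶜ α atTop)
    (isBoundedUnder_ge_aRatio Aᶜ α atTop).isCoboundedUnder_le

lemma tendsto_upperADens_dInftyUpper : Tendsto (upperADens A) atTop (𝓝 (dInftyUpper A)) := by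
  have hmono : Monotone fun α => upperADens A (max α 0) := fun α β h =>
    upperADens_mono A (le_max_right α 0) (max_le_max_right 0 h)
  have hbdd : BddAbove (Set.range fun α => upperADens A (max α 0)) :=
    ⟨1, by rintro _ ⟨α, rfl⟩; exact upperADens_le_one A _⟩
  refine tendsto_nhds_limUnder ⟨_, (tendsto_atTop_ciSup hmono hbdd).congr' ?_⟩
  filter_upwards [eventually_ge_atTop 0] with α hα
  rw [max_eq_left hα]

lemma tendsto_lowerADens_dInftyLower : Tendsto (lowerADens A) atTop (𝓝 (dInftyLower A)) := by
  refine tendsto_nhds_limUnder ⟨1 - dInftyUpper Aᶜ, ?_⟩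
  rw [funext (lowerADens_eq_one_sub_upperADens_compl A)]
  exact (tendsto_upperADens_dInftyUpper Aᶜ).const_sub 1

end LimitInα

/-- For every `A ⊆ ℕ`, `0 ≤ λ̲(A) ≤ d̲_∞(A) ≤ d̄_∞(A) ≤ λ̄(A) ≤ 1`. -/
theorem stmt5 (A : Set ℕ) :
    0 ≤ lamLower A ∧ lamLower A ≤ dInftyLower A ∧ dInftyLower A ≤ dInftyUpper A ∧
      dInftyUpper A ≤ lamUpper A ∧ lamUpper A ≤ 1 := by
  refine ⟨lamLower_nonneg A, ?_, ?_, ?_, lamUpper_le_one A⟩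
  · exact ge_of_tendsto (tendsto_lowerADens_dInftyLower A)
      ((eventually_ge_atTop 0).mono fun α hα => lamLower_le_lowerADens A hα)
  · exact le_of_tendsto_of_tendsto' (tendsto_lowerADens_dInftyLower A)
      (tendsto_upperADens_dInftyUpper A) (lowerADens_le_upperADens A)
  · exact le_of_tendsto (tendsto_upperADens_dInftyUpper A)
      ((eventually_ge_atTop 0).mono fun α hα => upperADens_le_lamUpper A hα)
end
end

section
/- For every sequence x ∈ [0,1]^ℕ there exists a sequence x̃ ∈ {0,1}^ℕ such that x̃ − x has Cesàro mean C(x̃ − x) = 0, f_C(x) = f_C(x̃), limsup_{n→∞} Θ_{θ,n}(x) = limsup_{n→∞} Θ_{θ,n}(x̃) for every θ ∈ (0,1), and t(x) = t(x̃). -/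
open Filter Topology

noncomputable section

/-!
With `Sₙ = x₁ + ⋯ + xₙ`, take for `x̃` the sequence whose partial sums are `⌊Sₙ⌋`; since
`0 ≤ xₙ ≤ 1`, its terms `⌊Sₙ⌋ - ⌊Sₙ₋₁⌋` are `0` or `1`. The partial sums of `x̃ - x` lie in
`(-1, 0]`, so the Cesàro averages of `x̃ - x` are `O(1/n)` and every `f ∈ Cesex` takes the same
value at `x` and `x̃`. The window sums in `Θ_{θ,n}` differ by at most `2`, so
`Θ_{θ,n}(x) - Θ_{θ,n}(x̃) = O(1/(n(1-θ)))`; hence the limsups in `n` agree, and so does `t`.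
-/

lemma limsup_le_of_tendsto_sub {ι : Type*} {l : Filter ι} [l.NeBot] {u v : ι → ℝ}
    (hv : IsBoundedUnder (· ≤ ·) l v) (hv' : IsBoundedUnder (· ≥ ·) l v)
    (h : Tendsto (u - v) l (𝓝 0)) : limsup u l ≤ limsup v l := by
  have key := limsup_add_le h.isBoundedUnder_ge h.isBoundedUnder_le hv'.isCoboundedUnder_le hv
  rwa [h.limsup_eq, zero_add, sub_add_cancel] at key

lemma limsup_eq_of_tendsto_sub {ι : Type*} {l : Filter ι} [l.NeBot] {u v : ι → ℝ}
    (hu : IsBoundedUnder (· ≤ ·) l u) (hu' : IsBoundedUnder (· ≥ ·) l u)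
    (hv : IsBoundedUnder (· ≤ ·) l v) (hv' : IsBoundedUnder (· ≥ ·) l v)
    (h : Tendsto (u - v) l (𝓝 0)) : limsup u l = limsup v l := by
  refine le_antisymm (limsup_le_of_tendsto_sub hv hv' h) (limsup_le_of_tendsto_sub hu hu' ?_)
  rw [← neg_sub, ← neg_zero]
  exact h.neg

def partialSum (x : ℕ → ℝ) (n : ℕ) : ℝ := ∑ i ∈ Finset.Icc 1 n, x i

@[simp]
lemma partialSum_zero (x : ℕ → ℝ) : partialSum x 0 = 0 := by
  simp [partialSum]

lemma partialSum_succ (x : ℕ → ℝ) (n : ℕ) : partialSum x (n + 1) = partialSum x n + x (n + 1) :=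
  Finset.sum_Icc_succ_top (Nat.le_add_left 1 n) x

lemma partialSum_sub (x y : ℕ → ℝ) (n : ℕ) :
    partialSum (x - y) n = partialSum x n - partialSum y n :=
  Finset.sum_sub_distrib ..

lemma partialSum_sub_partialSum (x : ℕ → ℝ) {m n : ℕ} (hmn : m ≤ n) :
    partialSum x n - partialSum x m = ∑ i ∈ Finset.Ioc m n, x i := by
  have hIcc : ∀ k, Finset.Icc 1 k = Finset.Ioc 0 k := Finset.Icc_add_one_left_eq_Ioc 0
  rw [partialSum, partialSum, hIcc, hIcc, ← Finset.sum_Ioc_consecutive x (Nat.zero_le m) hmn]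
  ring

def floorIncrements (x : ℕ → ℝ) (n : ℕ) : ℝ := ⌊partialSum x n⌋ - ⌊partialSum x (n - 1)⌋

lemma floorIncrements_succ (x : ℕ → ℝ) (n : ℕ) :
    floorIncrements x (n + 1) = ⌊partialSum x (n + 1)⌋ - ⌊partialSum x n⌋ := by
  simp [floorIncrements]

lemma floorIncrements_eq_zero_or_one {x : ℕ → ℝ} (hx : ∀ n, x n ∈ Set.Icc (0 : ℝ) 1) (n : ℕ) :
    floorIncrements x n = 0 ∨ floorIncrements x n = 1 := by
  cases n with
  | zero => simp [floorIncrements]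
  | succ n =>
    obtain ⟨hx0, hx1⟩ := hx (n + 1)
    have hle : ⌊partialSum x n⌋ ≤ ⌊partialSum x (n + 1)⌋ :=
      Int.floor_le_floor (by rw [partialSum_succ]; linarith)
    have hle_succ : ⌊partialSum x (n + 1)⌋ ≤ ⌊partialSum x n⌋ + 1 := by
      rw [← Int.floor_add_one]
      exact Int.floor_le_floor (by rw [partialSum_succ]; linarith)
    rw [floorIncrements_succ]
    rcases (by omega : ⌊partialSum x (n + 1)⌋ = ⌊partialSum x n⌋ ∨
        ⌊partialSum x (n + 1)⌋ = ⌊partialSum x n⌋ + 1) with h | h <;> simp [h]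

lemma partialSum_floorIncrements (x : ℕ → ℝ) (n : ℕ) :
    partialSum (floorIncrements x) n = ⌊partialSum x n⌋ := by
  induction n with
  | zero => simp
  | succ n ih => rw [partialSum_succ, ih, floorIncrements_succ]; ring

lemma abs_partialSum_floorIncrements_sub_le (x : ℕ → ℝ) (n : ℕ) :
    |partialSum (floorIncrements x) n - partialSum x n| ≤ 1 := by
  rw [partialSum_floorIncrements, abs_le]
  constructor <;> linarith [Int.floor_le (partialSum x n), Int.lt_floor_add_one (partialSum x n)]

lemma hasCesaro_sub_zero_of_abs_partialSum_sub_le {x y : ℕ → ℝ} {C : ℝ}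
    (h : ∀ n, |partialSum x n - partialSum y n| ≤ C) : HasCesaro (x - y) 0 := by
  refine squeeze_zero_norm (fun n => ?_) (tendsto_const_div_atTop_nhds_zero_nat C)
  change ‖partialSum (x - y) n / n‖ ≤ C / n
  rw [partialSum_sub, Real.norm_eq_abs, abs_div, Nat.abs_cast]
  exact div_le_div_of_nonneg_right (h n) n.cast_nonneg

lemma fC_eq_of_hasCesaro_sub_zero {x y : EllInfty} (h : HasCesaro (⇑y - ⇑x) 0) : fC x = fC y := by
  have hfxy : ∀ f ∈ Cesex, f x = f y := fun f hf => by
    have hf0 := hf.2 (y - x) 0 (by rwa [lp.coeFn_sub])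
    rw [map_sub] at hf0
    linarith
  exact congrArg sSup (Set.image_congr hfxy)

lemma Theta_eq {θ : ℝ} (hθ₀ : 0 ≤ θ) (hθ₁ : θ ≤ 1) (x : ℕ → ℝ) (n : ℕ) :
    Theta x θ n = (partialSum x n - partialSum x ⌊θ * n⌋₊) / (n * (1 - θ)) := by
  have hfloor_le : ⌊θ * n⌋₊ ≤ n := Nat.floor_le_of_le (mul_le_of_le_one_left n.cast_nonneg hθ₁)
  have hwindow : (Finset.Icc 1 n).filter (fun i : ℕ => θ * n < i) = Finset.Ioc ⌊θ * n⌋₊ n := by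
    ext i
    simp only [Finset.mem_filter, Finset.mem_Icc, Finset.mem_Ioc,
      ← Nat.floor_lt (mul_nonneg hθ₀ n.cast_nonneg)]
    omega
  rw [Theta, ← Finset.sum_filter, hwindow, partialSum_sub_partialSum x hfloor_le]

lemma tendsto_Theta_sub_of_abs_partialSum_sub_le {x y : ℕ → ℝ} {C : ℝ}
    (h : ∀ n, |partialSum x n - partialSum y n| ≤ C) {θ : ℝ} (hθ₀ : 0 ≤ θ) (hθ₁ : θ < 1) :
    Tendsto (Theta x θ - Theta y θ) atTop (𝓝 0) := by
  refine squeeze_zero_norm (fun n => ?_) (tendsto_const_div_atTop_nhds_zero_nat (2 * C / (1 - θ)))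
  have hden : 0 ≤ (n : ℝ) * (1 - θ) := mul_nonneg n.cast_nonneg (by linarith)
  have hnum : |(partialSum x n - partialSum y n) - (partialSum x ⌊θ * n⌋₊ - partialSum y ⌊θ * n⌋₊)|
      ≤ 2 * C := by
    have hn := abs_le.1 (h n)
    have hm := abs_le.1 (h ⌊θ * n⌋₊)
    rw [abs_le]
    constructor <;> linarith
  calc ‖(Theta x θ - Theta y θ) n‖
      = |(partialSum x n - partialSum y n) - (partialSum x ⌊θ * n⌋₊ - partialSum y ⌊θ * n⌋₊)|
          / (n * (1 - θ)) := by
        rw [Pi.sub_apply, Theta_eq hθ₀ hθ₁.le, Theta_eq hθ₀ hθ₁.le, div_sub_div_same,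
          Real.norm_eq_abs, abs_div, abs_of_nonneg hden]
        ring_nf
    _ ≤ 2 * C / (n * (1 - θ)) := div_le_div_of_nonneg_right hnum hden
    _ = 2 * C / (1 - θ) / n := by rw [div_div, mul_comm (1 - θ)]

lemma abs_Theta_le {x : ℕ → ℝ} {B : ℝ} (hx : ∀ i, |x i| ≤ B) {θ : ℝ} (hθ₁ : θ < 1) (n : ℕ) :
    |Theta x θ n| ≤ B / (1 - θ) := by
  have hB : 0 ≤ B := (abs_nonneg _).trans (hx 0)
  rcases Nat.eq_zero_or_pos n with rfl | hn
  · simpa [Theta] using div_nonneg hB (sub_nonneg.2 hθ₁.le)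
  have hnum : |∑ i ∈ Finset.Icc 1 n, if θ * n < (i : ℝ) then x i else 0| ≤ n * B := by
    refine (Finset.abs_sum_le_sum_abs _ _).trans ?_
    refine (Finset.sum_le_card_nsmul _ _ B fun i _ => ?_).trans (by simp)
    split_ifs
    · exact hx i
    · simpa using hB
  have hden : 0 < (n : ℝ) * (1 - θ) := mul_pos (by exact_mod_cast hn) (by linarith)
  calc |Theta x θ n| ≤ n * B / (n * (1 - θ)) := by
        rw [Theta, abs_div, abs_of_pos hden]
        exact div_le_div_of_nonneg_right hnum hden.le
    _ = B / (1 - θ) := mul_div_mul_left _ _ (by positivity)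

lemma ThetaSup_eq_of_abs_partialSum_sub_le {x y : ℕ → ℝ} {B C : ℝ}
    (hx : ∀ i, |x i| ≤ B) (hy : ∀ i, |y i| ≤ B) (h : ∀ n, |partialSum x n - partialSum y n| ≤ C)
    {θ : ℝ} (hθ₀ : 0 ≤ θ) (hθ₁ : θ < 1) : ThetaSup x θ = ThetaSup y θ := by
  have hbdd : ∀ z : ℕ → ℝ, (∀ i, |z i| ≤ B) → IsBoundedUnder (· ≤ ·) atTop |Theta z θ| :=
    fun z hz => isBoundedUnder_of ⟨B / (1 - θ), abs_Theta_le hz hθ₁⟩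
  obtain ⟨hx_le, hx_ge⟩ := isBoundedUnder_le_abs.1 (hbdd x hx)
  obtain ⟨hy_le, hy_ge⟩ := isBoundedUnder_le_abs.1 (hbdd y hy)
  exact limsup_eq_of_tendsto_sub hx_le hx_ge hy_le hy_ge
    (tendsto_Theta_sub_of_abs_partialSum_sub_le h hθ₀ hθ₁)

lemma tFun_congr {x y : ℕ → ℝ} (h : ∀ θ ∈ Set.Ioo (0 : ℝ) 1, ThetaSup x θ = ThetaSup y θ) :
    tFun x = tFun y := by
  unfold tFun limUnder
  rw [Filter.map_congr (eventually_of_mem (Ioo_mem_nhdsLT zero_lt_one) h)]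

/-- For every `x ∈ [0,1]^ℕ` there is a zero-one sequence `y` with `C(y - x) = 0`,
`f_C(x) = f_C(y)`, `Θ_θ(x) = Θ_θ(y)` for all `θ ∈ (0,1)`, and `t(x) = t(y)`. -/
theorem stmt10 (x : EllInfty) (hx : ∀ n, x n ∈ Set.Icc (0 : ℝ) 1) :
    ∃ y : EllInfty, (∀ n, y n = 0 ∨ y n = 1) ∧ HasCesaro (⇑y - ⇑x) 0 ∧
      fC x = fC y ∧ (∀ θ ∈ Set.Ioo (0 : ℝ) 1, ThetaSup (⇑x) θ = ThetaSup (⇑y) θ) ∧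
      tFun (⇑x) = tFun (⇑y) := by
  have hx_abs : ∀ n, |x n| ≤ 1 := fun n => abs_le.2 ⟨by linarith [(hx n).1], (hx n).2⟩
  have hy01 := floorIncrements_eq_zero_or_one hx
  have hy_abs : ∀ n, |floorIncrements x n| ≤ 1 := fun n => by rcases hy01 n with h | h <;> simp [h]
  let y : EllInfty := ⟨floorIncrements x, memℓp_infty ⟨1, by rintro _ ⟨n, rfl⟩; exact hy_abs n⟩⟩
  have hdisc : ∀ n, |partialSum y n - partialSum x n| ≤ 1 := abs_partialSum_floorIncrements_sub_le x
  have hces : HasCesaro (⇑y - ⇑x) 0 := hasCesaro_sub_zero_of_abs_partialSum_sub_le hdisc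
  have hTheta : ∀ θ ∈ Set.Ioo (0 : ℝ) 1, ThetaSup x θ = ThetaSup y θ := fun θ hθ =>
    (ThetaSup_eq_of_abs_partialSum_sub_le hy_abs hx_abs hdisc hθ.1.le hθ.2).symm
  exact ⟨y, hy01, hces, fC_eq_of_hasCesaro_sub_zero hces, hTheta, tFun_congr hTheta⟩
end
end
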